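/- arXiv:1811.06800 — 4 statements merged into one kernel-verified Lean document; each statement's English description precedes it below -/
import Mathlib

section
/- Let E be a real or complex Banach space, h₀ > 0, and let g : ℝ → E be the sum of a power series centered at 0 with radius of convergence strictly greater than h₀. Then for every j ≥ 0 there exists a constant C > 0 such that for all h ∈ [0, h₀], ‖∫_0^1 P_j(c) g(ch) dc‖ ≤ C h^j. -/
/-!
Write `P_j = K • Q^{(j)}` with `Q = (X² - X)^j`. Since `Q` vanishes to order `j` at `0` and `1`,
integrating by parts `j` times moves every derivative onto `c ↦ g (c h)`, whose `j`-th derivative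
is `h^j g^{(j)}(c h)`; as `g` is analytic on a neighbourhood of `[0, h₀]`, `g^{(j)}` is bounded
there, which gives the bound `C h^j`.
-/

/-- The shifted and scaled Legendre polynomial on `[0,1]`, via Rodrigues' formula:
`P_j(x) = (√(2j+1)/j!) (d/dx)^j [(x² - x)^j]`. -/
noncomputable def legendreP (j : ℕ) : ℝ → ℝ :=
  fun x => (Real.sqrt (2 * (j : ℝ) + 1) / (Nat.factorial j : ℝ)) *
    iteratedDeriv j (fun y : ℝ => (y ^ 2 - y) ^ j) x

open Polynomial Set intervalIntegral
open scoped Nat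

namespace Polynomial

theorem iteratedDeriv_eval (p : ℝ[X]) (k : ℕ) :
    iteratedDeriv k (fun x => p.eval x) = fun x => (derivative^[k] p).eval x := by
  induction k generalizing p with
  | zero => rfl
  | succ k ih =>
    have hd : _root_.deriv (fun x => p.eval x) = fun x => (derivative p).eval x := by
      ext x
      exact p.deriv
    rw [iteratedDeriv_succ', hd, ih, Function.iterate_succ_apply]

theorem eval_iterate_derivative_pow_eq_zero {R : Type*} [CommRing R] {p : R[X]} {x : R}
    (hx : p.eval x = 0) {n k : ℕ} (hk : k < n) : (derivative^[k] (p ^ n)).eval x = 0 := by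
  obtain ⟨q, hq⟩ := pow_sub_dvd_iterate_derivative_pow p n k
  rw [hq, eval_mul, eval_pow, hx, zero_pow (Nat.sub_ne_zero_of_lt hk), zero_mul]

end Polynomial

theorem legendreP_eq (j : ℕ) :
    legendreP j =
      fun x => √(2 * j + 1) / j ! * (derivative^[j] ((X ^ 2 - X : ℝ[X]) ^ j)).eval x := by
  have hQ : (fun y : ℝ => (y ^ 2 - y) ^ j) = fun y => ((X ^ 2 - X : ℝ[X]) ^ j).eval y := by
    funext y
    simp
  unfold legendreP
  rw [hQ, Polynomial.iteratedDeriv_eval]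

theorem mul_mem_Icc_of_mem_unitInterval {c h h₀ : ℝ} (hc : c ∈ Icc (0 : ℝ) 1)
    (hh : h ∈ Icc 0 h₀) : c * h ∈ Icc 0 h₀ :=
  ⟨mul_nonneg hc.1 hh.1, (mul_le_of_le_one_left hh.1 hc.2).trans hh.2⟩

theorem exists_pos_bound_norm_integral_smul_comp_mul {E : Type*} [NormedAddCommGroup E]
    [NormedSpace ℝ E] {u : ℝ → ℝ} (hu : ContinuousOn u (Icc 0 1)) {F : ℝ → E} {h₀ : ℝ}
    (hF : ContinuousOn F (Icc 0 h₀)) :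
    ∃ C > 0, ∀ h ∈ Icc 0 h₀, ‖∫ c in (0 : ℝ)..1, u c • F (c * h)‖ ≤ C := by
  obtain ⟨M₁, hM₁⟩ := isCompact_Icc.exists_bound_of_continuousOn hu
  obtain ⟨M₂, hM₂⟩ := isCompact_Icc.exists_bound_of_continuousOn hF
  refine ⟨max (M₁ * M₂) 1, by positivity, fun h hh => ?_⟩
  calc ‖∫ c in (0 : ℝ)..1, u c • F (c * h)‖ ≤ M₁ * M₂ * |1 - 0| :=
        norm_integral_le_of_norm_le_const fun c hc => ?_
    _ ≤ max (M₁ * M₂) 1 := by simp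
  replace hc : c ∈ Icc (0 : ℝ) 1 := Ioc_subset_Icc_self (by rwa [uIoc_of_le zero_le_one] at hc)
  rw [norm_smul]
  exact mul_le_mul (hM₁ c hc) (hM₂ _ (mul_mem_Icc_of_mem_unitInterval hc hh)) (norm_nonneg _)
    ((norm_nonneg _).trans (hM₁ c hc))

section Integral

variable {E : Type*} [NormedAddCommGroup E] [NormedSpace ℝ E] [CompleteSpace E]

theorem integral_eval_derivative_smul_eq_neg {a b : ℝ} {p : ℝ[X]} (ha : p.eval a = 0)
    (hb : p.eval b = 0) {v v' : ℝ → E} (hv : ∀ x ∈ uIcc a b, HasDerivAt v (v' x) x)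
    (hv' : ContinuousOn v' (uIcc a b)) :
    ∫ x in a..b, (derivative p).eval x • v x = -∫ x in a..b, p.eval x • v' x := by
  rw [integral_smul_deriv_eq_deriv_smul (fun x _ => p.hasDerivAt x) hv
    (p.derivative.continuous.intervalIntegrable a b) hv'.intervalIntegrable, ha, hb]
  simp

theorem integral_eval_iterate_derivative_smul {a b : ℝ} {p : ℝ[X]} {n : ℕ}
    (ha : ∀ k < n, (derivative^[k] p).eval a = 0) (hb : ∀ k < n, (derivative^[k] p).eval b = 0)
    {f : ℕ → ℝ → E} (hf : ∀ k < n, ∀ x ∈ uIcc a b, HasDerivAt (f k) (f (k + 1) x) x)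
    (hfn : ContinuousOn (f n) (uIcc a b)) :
    ∫ x in a..b, (derivative^[n] p).eval x • f 0 x =
      (-1 : ℝ) ^ n • ∫ x in a..b, p.eval x • f n x := by
  induction n generalizing f with
  | zero => simp
  | succ n ih =>
    have hf1 : ContinuousOn (f 1) (uIcc a b) := by
      rcases n with _ | n
      · exact hfn
      · exact fun x hx => (hf 1 (by omega) x hx).continuousAt.continuousWithinAt
    rw [Function.iterate_succ_apply', integral_eval_derivative_smul_eq_neg (ha n n.lt_succ_self)
      (hb n n.lt_succ_self) (hf 0 n.succ_pos) hf1, ih (fun k hk => ha k (by omega))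
      (fun k hk => hb k (by omega)) (f := fun k => f (k + 1)) (fun k hk => hf (k + 1) (by omega))
      hfn, pow_succ, mul_smul, neg_one_smul, smul_neg]

theorem AnalyticOnNhd.iteratedDeriv {f : ℝ → E} {s : Set ℝ} (hf : AnalyticOnNhd ℝ f s)
    (n : ℕ) :
    AnalyticOnNhd ℝ (_root_.iteratedDeriv n f) s := by
  rw [iteratedDeriv_eq_iterate]
  exact hf.iterated_deriv n

theorem AnalyticOnNhd.hasDerivAt_smul_iteratedDeriv_comp_mul {g : ℝ → E} {s : Set ℝ}
    (hg : AnalyticOnNhd ℝ g s) (h : ℝ) (k : ℕ) {x : ℝ} (hx : x * h ∈ s) :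
    HasDerivAt (fun c => h ^ k • _root_.iteratedDeriv k g (c * h))
      (h ^ (k + 1) • _root_.iteratedDeriv (k + 1) g (x * h)) x := by
  have hd : HasDerivAt (_root_.iteratedDeriv k g)
      (_root_.iteratedDeriv (k + 1) g (x * h)) (x * h) := by
    rw [_root_.iteratedDeriv_succ]
    exact (hg.iteratedDeriv k _ hx).differentiableAt.hasDerivAt
  have := (hd.scomp x (hasDerivAt_mul_const h)).const_smul (h ^ k)
  rw [smul_smul, ← pow_succ] at this
  exact this

theorem integral_iterate_derivative_smul_comp_mul {g : ℝ → E} {h₀ h : ℝ}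
    (hg : AnalyticOnNhd ℝ g (Icc 0 h₀)) (hh : h ∈ Icc 0 h₀) {p : ℝ[X]} {n : ℕ}
    (h0 : ∀ k < n, (derivative^[k] p).eval 0 = 0) (h1 : ∀ k < n, (derivative^[k] p).eval 1 = 0) :
    ∫ c in (0 : ℝ)..1, (derivative^[n] p).eval c • g (c * h) =
      (-h) ^ n • ∫ c in (0 : ℝ)..1, p.eval c • iteratedDeriv n g (c * h) := by
  have hmem : ∀ c ∈ uIcc (0 : ℝ) 1, c * h ∈ Icc 0 h₀ := fun c hc =>
    mul_mem_Icc_of_mem_unitInterval (by rwa [uIcc_of_le zero_le_one] at hc) hh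
  have hcont : ContinuousOn (fun c => h ^ n • iteratedDeriv n g (c * h)) (uIcc 0 1) :=
    fun c hc =>
      (hg.hasDerivAt_smul_iteratedDeriv_comp_mul h n (hmem c hc)).continuousAt.continuousWithinAt
  have := integral_eval_iterate_derivative_smul h0 h1
    (f := fun k c => h ^ k • iteratedDeriv k g (c * h))
    (fun k _ c hc => hg.hasDerivAt_smul_iteratedDeriv_comp_mul h k (hmem c hc)) hcont
  simp only [pow_zero, one_smul, iteratedDeriv_zero] at this
  rw [this, neg_pow h, mul_smul, ← integral_smul (h ^ n)]
  congr 2 with c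
  exact smul_comm _ _ _

end Integral

theorem integral_legendreP_smul_isBigO_general
    {E : Type*} [NormedAddCommGroup E] [NormedSpace ℝ E] [CompleteSpace E]
    (h₀ : ℝ) (g : ℝ → E) (p : FormalMultilinearSeries ℝ ℝ E) (r : ENNReal)
    (hr : ENNReal.ofReal h₀ < r) (hg : HasFPowerSeriesOnBall g p 0 r) (j : ℕ) :
    ∃ C > 0, ∀ h ∈ Set.Icc (0:ℝ) h₀,
      ‖∫ c in (0:ℝ)..1, legendreP j c • g (c * h)‖ ≤ C * h ^ j := by
  set Q : ℝ[X] := (X ^ 2 - X) ^ j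
  have hIcc : Icc 0 h₀ ⊆ Metric.eball (0 : ℝ) r := fun x hx => by
    rw [Metric.mem_eball, edist_dist, Real.dist_eq, sub_zero, abs_of_nonneg hx.1]
    exact (ENNReal.ofReal_le_ofReal hx.2).trans_lt hr
  have hg' : AnalyticOnNhd ℝ g (Icc 0 h₀) := hg.analyticOnNhd.mono hIcc
  have hQ0 : ∀ k < j, (derivative^[k] Q).eval 0 = 0 :=
    fun k hk => eval_iterate_derivative_pow_eq_zero (by simp) hk
  have hQ1 : ∀ k < j, (derivative^[k] Q).eval 1 = 0 :=
    fun k hk => eval_iterate_derivative_pow_eq_zero (by simp) hk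
  obtain ⟨C, hC, hbound⟩ := exists_pos_bound_norm_integral_smul_comp_mul
    Q.continuous.continuousOn ((hg'.iteratedDeriv j).continuousOn)
  refine ⟨√(2 * j + 1) / j ! * C, by positivity, fun h hh => ?_⟩
  calc ‖∫ c in (0 : ℝ)..1, legendreP j c • g (c * h)‖
      = √(2 * j + 1) / j ! * h ^ j *
          ‖∫ c in (0 : ℝ)..1, Q.eval c • iteratedDeriv j g (c * h)‖ := by
        simp_rw [legendreP_eq, mul_smul]
        rw [integral_smul, integral_iterate_derivative_smul_comp_mul hg' hh hQ0 hQ1, norm_smul,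
          norm_smul, norm_pow, norm_neg, Real.norm_of_nonneg hh.1,
          Real.norm_of_nonneg (by positivity), mul_assoc]
    _ ≤ √(2 * j + 1) / j ! * C * h ^ j := by
        rw [mul_right_comm]
        gcongr
        · exact pow_nonneg hh.1 j
        · exact hbound h hh

/-- Lemma 2.1: if `g : ℝ → E` is the sum of a power series centered at `0` with radius of
convergence `> h₀`, then for every `j` there is `C > 0` with
`‖∫_0^1 P_j(c) g(ch) dc‖ ≤ C h^j` for all `h ∈ [0, h₀]`. -/
theorem integral_legendreP_smul_isBigO
    {E : Type*} [NormedAddCommGroup E] [NormedSpace ℝ E] [CompleteSpace E]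
    (h₀ : ℝ) (hh₀ : 0 < h₀) (g : ℝ → E) (p : FormalMultilinearSeries ℝ ℝ E) (r : ENNReal)
    (hr : ENNReal.ofReal h₀ < r) (hg : HasFPowerSeriesOnBall g p 0 r) (j : ℕ) :
    ∃ C > 0, ∀ h ∈ Set.Icc (0:ℝ) h₀,
      ‖∫ c in (0:ℝ)..1, legendreP j c • g (c * h)‖ ≤ C * h ^ j :=
  integral_legendreP_smul_isBigO_general h₀ g p r hr hg j
end

section
/- Let E be a real Banach space, f : E → E, y₀ ∈ E, h₀ > 0, and let y : ℝ → E satisfy y(0) = y₀ and y′(t) = f(y(t)) for all t in a neighborhood of [0, h₀]. Assume that the map t ↦ f(y(t)) is the sum of a power series centered at 0 with radius of convergence strictly greater than h₀. For h ∈ (0, h₀] define the Fourier coefficients γ_j(y) = ∫_0^1 P_j(τ) f(y(τh)) dτ. Then for every j ≥ 0 there exists C > 0 such that ‖γ_j(y)‖ ≤ C h^j for all h ∈ (0, h₀]. -/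
/-!
Write `g(t) = f(y(t))` as `T_j(t) + R_j(t)` with `T_j` the partial sum of degree `< j` of its
power series. Integrating by parts `j` times in Rodrigues' formula shows that `P_j` is orthogonal
to every polynomial of degree `< j`, so `γ_j(y) = ∫_0^1 P_j(τ) R_j(τh) dτ`. On a ball strictly
inside the disc of convergence the remainder obeys `‖R_j(t)‖ ≤ K |t|^j`, whence
`‖γ_j(y)‖ ≤ (sup_{[0,1]} |P_j|) K h^j`.
-/

section Legendre

open Polynomial

theorem Polynomial.iteratedDeriv_eval_s4 {𝕜 : Type*} [NontriviallyNormedField 𝕜] (q : 𝕜[X])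
    (n : ℕ) : iteratedDeriv n (fun x => q.eval x) = fun x => (derivative^[n] q).eval x := by
  induction n with
  | zero => simp
  | succ n ih =>
    rw [iteratedDeriv_succ, ih, Function.iterate_succ_apply']
    funext x
    exact Polynomial.deriv _

noncomputable def rodriguesPoly (j : ℕ) : ℝ[X] := (X ^ 2 - X) ^ j

theorem legendreP_eq_eval (j : ℕ) : legendreP j =
    fun x => (Real.sqrt (2 * (j : ℝ) + 1) / (Nat.factorial j : ℝ)) *
      (derivative^[j] (rodriguesPoly j)).eval x := by
  have hpoly : (fun y : ℝ => (y ^ 2 - y) ^ j) = fun y => (rodriguesPoly j).eval y := by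
    simp [rodriguesPoly]
  funext x
  rw [legendreP, hpoly, Polynomial.iteratedDeriv_eval_s4]

@[fun_prop]
theorem continuous_legendreP (j : ℕ) : Continuous (legendreP j) := by
  rw [legendreP_eq_eval]
  exact continuous_const.mul (Polynomial.continuous _)

theorem eval_iterate_derivative_rodriguesPoly_eq_zero {j m : ℕ} (hm : m < j) {t : ℝ}
    (ht : t = 0 ∨ t = 1) : (derivative^[m] (rodriguesPoly j)).eval t = 0 := by
  have hne : rodriguesPoly j ≠ 0 := by
    rw [rodriguesPoly, show (X ^ 2 - X : ℝ[X]) = X * (X - C 1) by rw [C_1]; ring]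
    exact pow_ne_zero _ (mul_ne_zero X_ne_zero (X_sub_C_ne_zero 1))
  have hdvd : (X - C t) ^ j ∣ rodriguesPoly j := by
    refine pow_dvd_pow_of_dvd ?_ j
    rcases ht with rfl | rfl
    · exact ⟨X - 1, by rw [C_0]; ring⟩
    · exact ⟨X, by rw [C_1]; ring⟩
  exact isRoot_iterate_derivative_of_lt_rootMultiplicity
    (hm.trans_le ((le_rootMultiplicity_iff hne).2 hdvd))

/-- Integrate by parts `m` times: the boundary terms vanish because `rodriguesPoly j` has roots
of order `j` at `0` and `1`. -/
theorem integral_eval_mul_iterate_derivative_rodriguesPoly_eq_zero {j m : ℕ} (hm : m ≤ j)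
    {u : ℝ[X]} (hu : derivative^[m] u = 0) :
    ∫ x in (0 : ℝ)..1, u.eval x * (derivative^[m] (rodriguesPoly j)).eval x = 0 := by
  induction m generalizing u with
  | zero => simp_all
  | succ m ih =>
    set R := derivative^[m] (rodriguesPoly j)
    have hR : derivative^[m + 1] (rodriguesPoly j) = derivative R :=
      Function.iterate_succ_apply' _ _ _
    have hparts := intervalIntegral.integral_mul_deriv_eq_deriv_mul (a := 0) (b := 1)
      (fun x _ => u.hasDerivAt x) (fun x _ => R.hasDerivAt x)
      ((Polynomial.continuous _).intervalIntegrable 0 1)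
      ((Polynomial.continuous _).intervalIntegrable 0 1)
    rw [hR, hparts, eval_iterate_derivative_rodriguesPoly_eq_zero (by omega) (Or.inr rfl),
      eval_iterate_derivative_rodriguesPoly_eq_zero (by omega) (Or.inl rfl),
      ih (by omega) (by rwa [← Function.iterate_succ_apply])]
    simp

theorem integral_legendreP_mul_pow_eq_zero {j k : ℕ} (hk : k < j) :
    ∫ x in (0 : ℝ)..1, legendreP j x * x ^ k = 0 := by
  have hpow : derivative^[j] (X ^ k : ℝ[X]) = 0 := iterate_derivative_eq_zero (by simpa)
  have hzero := integral_eval_mul_iterate_derivative_rodriguesPoly_eq_zero le_rfl hpow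
  simp only [eval_pow, eval_X] at hzero
  simp only [legendreP_eq_eval, mul_right_comm _ _ (_ ^ k), mul_assoc]
  rw [intervalIntegral.integral_const_mul, hzero, mul_zero]

theorem integral_legendreP_smul_partialSum_eq_zero {E : Type*} [NormedAddCommGroup E]
    [NormedSpace ℝ E] [CompleteSpace E] (p : FormalMultilinearSeries ℝ ℝ E) {n j : ℕ}
    (hn : n ≤ j) (h : ℝ) :
    ∫ τ in (0 : ℝ)..1, legendreP j τ • p.partialSum n (τ * h) = 0 := by
  have hterm (k : ℕ) (τ : ℝ) : legendreP j τ • p k (fun _ => τ * h) =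
      (h ^ k * (legendreP j τ * τ ^ k)) • p.coeff k := by
    rw [p.apply_eq_pow_smul_coeff, smul_smul, mul_pow]; ring_nf
  simp only [FormalMultilinearSeries.partialSum, Finset.smul_sum, hterm]
  rw [intervalIntegral.integral_finsetSum fun k _ =>
    (by fun_prop : Continuous _).intervalIntegrable 0 1]
  refine Finset.sum_eq_zero fun k hk => ?_
  rw [intervalIntegral.integral_smul_const, intervalIntegral.integral_const_mul,
    integral_legendreP_mul_pow_eq_zero (by simp at hk; omega), mul_zero, zero_smul]

end Legendre

theorem HasFPowerSeriesOnBall.exists_norm_sub_partialSum_le_mul_pow {𝕜 E F : Type*}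
    [NontriviallyNormedField 𝕜] [NormedAddCommGroup E] [NormedSpace 𝕜 E]
    [NormedAddCommGroup F] [NormedSpace 𝕜 F] {f : E → F} {p : FormalMultilinearSeries 𝕜 E F}
    {x : E} {r : ENNReal} (hf : HasFPowerSeriesOnBall f p x r) {r' : NNReal}
    (hr' : (r' : ENNReal) < r) (n : ℕ) :
    ∃ K > 0, ∀ y ∈ Metric.ball (0 : E) r',
      ‖f (x + y) - p.partialSum n y‖ ≤ K * ‖y‖ ^ n := by
  obtain ⟨a, ha, C, hC, happrox⟩ := hf.uniform_geometric_approx' hr'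
  rcases eq_zero_or_pos r' with rfl | hr'_pos
  · exact ⟨1, one_pos, by simp⟩
  refine ⟨C / r' ^ n, by positivity, fun y hy => ?_⟩
  calc ‖f (x + y) - p.partialSum n y‖ ≤ C * (a * (‖y‖ / r')) ^ n := happrox y hy n
    _ ≤ C * (‖y‖ / r') ^ n := by
      gcongr
      · exact mul_nonneg ha.1.le (by positivity)
      · exact mul_le_of_le_one_left (by positivity) ha.2.le
    _ = C / r' ^ n * ‖y‖ ^ n := by rw [div_pow]; ring

theorem integral_legendreP_smul_sub_partialSum {E : Type*} [NormedAddCommGroup E]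
    [NormedSpace ℝ E] [CompleteSpace E] (p : FormalMultilinearSeries ℝ ℝ E) {n j : ℕ}
    (hn : n ≤ j) (h : ℝ) {φ : ℝ → E} (hφ : ContinuousOn φ (Set.uIcc 0 1)) :
    ∫ τ in (0 : ℝ)..1, legendreP j τ • (φ τ - p.partialSum n (τ * h)) =
      ∫ τ in (0 : ℝ)..1, legendreP j τ • φ τ := by
  simp only [smul_sub]
  rw [intervalIntegral.integral_sub, integral_legendreP_smul_partialSum_eq_zero p hn, sub_zero]
  · exact ((continuous_legendreP j).continuousOn.smul hφ).intervalIntegrable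
  · exact ((continuous_legendreP j).smul ((p.partialSum_continuous n).comp
      (continuous_mul_const h))).intervalIntegrable 0 1

theorem exists_norm_integral_legendreP_smul_le (E : Type*) [NormedAddCommGroup E]
    [NormedSpace ℝ E] (j : ℕ) : ∃ M > 0, ∀ (φ : ℝ → E) (B : ℝ),
      (∀ τ ∈ Set.Ioc (0 : ℝ) 1, ‖φ τ‖ ≤ B) →
        ‖∫ τ in (0 : ℝ)..1, legendreP j τ • φ τ‖ ≤ M * B := by
  obtain ⟨M, hM⟩ := (isCompact_Icc (a := (0 : ℝ)) (b := 1)).exists_bound_of_continuousOn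
    (continuous_legendreP j).continuousOn
  refine ⟨max M 1, by positivity, fun φ B hφ => ?_⟩
  refine (intervalIntegral.norm_integral_le_of_norm_le_const (C := max M 1 * B)
    fun τ hτ => ?_).trans_eq (by simp)
  rw [Set.uIoc_of_le zero_le_one] at hτ
  rw [norm_smul]
  exact mul_le_mul ((hM τ (Set.Ioc_subset_Icc_self hτ)).trans (le_max_left M 1)) (hφ τ hτ)
    (norm_nonneg _) (by positivity)

theorem fourier_coeff_isBigO_general
    {E : Type*} [NormedAddCommGroup E] [NormedSpace ℝ E] [CompleteSpace E]
    (f : E → E) (h₀ : ℝ) (y : ℝ → E)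
    (p : FormalMultilinearSeries ℝ ℝ E) (r : ENNReal)
    (hr : ENNReal.ofReal h₀ < r)
    (hg : HasFPowerSeriesOnBall (fun t : ℝ => f (y t)) p 0 r) (j : ℕ) :
    ∃ C > 0, ∀ h ∈ Set.Ioc (0:ℝ) h₀,
      ‖∫ τ in (0:ℝ)..1, legendreP j τ • f (y (τ * h))‖ ≤ C * h ^ j := by
  obtain ⟨r', hh₀r', hr'r⟩ := ENNReal.lt_iff_exists_nnreal_btwn.1 hr
  obtain ⟨K, hK, hrem⟩ := hg.exists_norm_sub_partialSum_le_mul_pow hr'r j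
  obtain ⟨M, hM, hintegral⟩ := exists_norm_integral_legendreP_smul_le E j
  refine ⟨M * K, by positivity, fun h ⟨hpos, hle⟩ => ?_⟩
  have hmem (τ : ℝ) (hτ : τ ∈ Set.Icc (0 : ℝ) 1) :
      ‖τ * h‖ ≤ h ∧ τ * h ∈ Metric.ball 0 r' := by
    have hτh : ‖τ * h‖ ≤ h := by
      rw [Real.norm_of_nonneg (mul_nonneg hτ.1 hpos.le)]
      exact mul_le_of_le_one_left hpos.le hτ.2
    have hh₀_lt : h₀ < r' := (ENNReal.ofReal_lt_coe_iff (hpos.le.trans hle)).1 hh₀r'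
    exact ⟨hτh, mem_ball_zero_iff.2 (by linarith)⟩
  have hcont : ContinuousOn (fun τ => f (y (τ * h))) (Set.uIcc 0 1) := by
    refine hg.continuousOn.comp (by fun_prop) fun τ hτ => ?_
    rw [Set.uIcc_of_le zero_le_one] at hτ
    exact Metric.eball_subset_eball hr'r.le (by rw [Metric.eball_coe]; exact (hmem τ hτ).2)
  rw [← integral_legendreP_smul_sub_partialSum p le_rfl h hcont, mul_assoc]
  refine hintegral _ _ fun τ hτ => ?_
  obtain ⟨hτh, hτr'⟩ := hmem τ (Set.Ioc_subset_Icc_self hτ)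
  calc ‖f (y (τ * h)) - p.partialSum j (τ * h)‖
      = ‖f (y (0 + τ * h)) - p.partialSum j (τ * h)‖ := by rw [zero_add]
    _ ≤ K * ‖τ * h‖ ^ j := hrem _ hτr'
    _ ≤ K * h ^ j := by gcongr

/-- Corollary 2.2: if `y` solves `ẏ = f(y)`, `y(0) = y₀` near `[0, h₀]` and `t ↦ f(y(t))`
is the sum of a power series centered at `0` with radius of convergence `> h₀`, then the
Fourier coefficients `γ_j(y) = ∫_0^1 P_j(τ) f(y(τh)) dτ` satisfy `γ_j(y) = O(h^j)`. -/
theorem fourier_coeff_isBigO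
    {E : Type*} [NormedAddCommGroup E] [NormedSpace ℝ E] [CompleteSpace E]
    (f : E → E) (y₀ : E) (h₀ : ℝ) (hh₀ : 0 < h₀) (y : ℝ → E)
    (hy0 : y 0 = y₀)
    (U : Set ℝ) (hU : IsOpen U) (hUI : Set.Icc (0:ℝ) h₀ ⊆ U)
    (hy : ∀ t ∈ U, HasDerivAt y (f (y t)) t)
    (p : FormalMultilinearSeries ℝ ℝ E) (r : ENNReal)
    (hr : ENNReal.ofReal h₀ < r)
    (hg : HasFPowerSeriesOnBall (fun t : ℝ => f (y t)) p 0 r) (j : ℕ) :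
    ∃ C > 0, ∀ h ∈ Set.Ioc (0:ℝ) h₀,
      ‖∫ τ in (0:ℝ)..1, legendreP j τ • f (y (τ * h))‖ ≤ C * h ^ j :=
  fourier_coeff_isBigO_general f h₀ y p r hr hg j
end

section
/- Let E be a real Banach space, f : E → E continuous, y₀ ∈ E, T > 0. Let F : ℝ → ℝ → E → E (the general solution map (t, ξ, η) ↦ F t ξ η of the ODE ẏ = f(y) with y(ξ) = η), let Φ : ℝ × ℝ → L(E, E) be continuous, and let σ : ℝ → E be continuously differentiable with σ(0) = y₀. Set y(t) := F t 0 y₀. Assume for every t̄ ∈ [0, T]: (i) F t̄ t̄ η = η for all η ∈ E; (ii) for every t ∈ [0, t̄], the joint map (ξ, η) ↦ F t̄ ξ η has at the point (t, σ(t)) the Fréchet derivative (δξ, δη) ↦ −Φ(t̄, t)(f(σ(t))) δξ + Φ(t̄, t)(δη); (iii) the map t ↦ Φ(t̄, t)(σ′(t) − f(σ(t))) is continuous on [0, t̄]. Then for every t̄ ∈ [0, T], σ(t̄) − y(t̄) = ∫_0^{t̄} Φ(t̄, t)(σ′(t) − f(σ(t))) dt. -/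
/-! The map `t ↦ F tb t (σ t)` interpolates between `F tb 0 y₀ = y tb` at `t = 0` and
`F tb tb (σ tb) = σ tb` at `t = tb`. By the chain rule and the perturbation identities its
derivative is `Φ(tb, t)(σ' t - f (σ t))`, so the claim is the fundamental theorem of calculus. -/

open ContinuousLinearMap

section

variable {E G : Type*} [NormedAddCommGroup E] [NormedSpace ℝ E]
  [NormedAddCommGroup G] [NormedSpace ℝ G]

theorem HasFDerivAt.hasDerivAt_comp_graph {F : ℝ → E → G} {A : E →L[ℝ] G} {v σ' : E}
    {σ : ℝ → E} {t : ℝ}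
    (hF : HasFDerivAt (fun p : ℝ × E => F p.1 p.2)
      (A.comp (snd ℝ ℝ E) - (fst ℝ ℝ E).smulRight (A v)) (t, σ t))
    (hσ : HasDerivAt σ σ' t) :
    HasDerivAt (fun s => F s (σ s)) (A (σ' - v)) t := by
  have hgraph : HasDerivAt (fun s => (s, σ s)) ((1 : ℝ), σ') t := (hasDerivAt_id t).prodMk hσ
  refine (hF.comp_hasDerivAt t hgraph).congr_deriv ?_
  simp [map_sub]

theorem sub_eq_integral_of_hasFDerivAt_graph [CompleteSpace G] {F : ℝ → E → G}
    {A : ℝ → E →L[ℝ] G} {v σ : ℝ → E} {a b : ℝ} (hab : a ≤ b)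
    (hσ : ∀ t ∈ Set.Icc a b, DifferentiableAt ℝ σ t)
    (hF : ∀ t ∈ Set.Icc a b, HasFDerivAt (fun p : ℝ × E => F p.1 p.2)
      ((A t).comp (snd ℝ ℝ E) - (fst ℝ ℝ E).smulRight (A t (v t))) (t, σ t))
    (hcont : ContinuousOn (fun t => A t (deriv σ t - v t)) (Set.Icc a b)) :
    F b (σ b) - F a (σ a) = ∫ t in a..b, A t (deriv σ t - v t) := by
  rw [← Set.uIcc_of_le hab] at hσ hF hcont
  refine (intervalIntegral.integral_eq_sub_of_hasDerivAt (f := fun s => F s (σ s))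
    (fun t ht => ?_) hcont.intervalIntegrable).symm
  exact (hF t ht).hasDerivAt_comp_graph (hσ t ht).hasDerivAt

end

theorem error_representation_general
    {E : Type*} [NormedAddCommGroup E] [NormedSpace ℝ E] [CompleteSpace E]
    (f : E → E) (y₀ : E) (T : ℝ)
    (F : ℝ → ℝ → E → E) (Φ : ℝ × ℝ → E →L[ℝ] E)
    (σ : ℝ → E) (hσ : ContDiff ℝ 1 σ) (hσ0 : σ 0 = y₀)
    (y : ℝ → E) (hy : ∀ t, y t = F t 0 y₀)
    (hFid : ∀ tb ∈ Set.Icc (0:ℝ) T, ∀ η : E, F tb tb η = η)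
    (hFderiv : ∀ tb ∈ Set.Icc (0:ℝ) T, ∀ t ∈ Set.Icc (0:ℝ) tb,
      HasFDerivAt (fun p : ℝ × E => F tb p.1 p.2)
        ((Φ (tb, t)).comp (ContinuousLinearMap.snd ℝ ℝ E) -
          (ContinuousLinearMap.fst ℝ ℝ E).smulRight (Φ (tb, t) (f (σ t))))
        (t, σ t))
    (hcont : ∀ tb ∈ Set.Icc (0:ℝ) T,
      ContinuousOn (fun t : ℝ => Φ (tb, t) (deriv σ t - f (σ t))) (Set.Icc (0:ℝ) tb)) :
    ∀ tb ∈ Set.Icc (0:ℝ) T,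
      σ tb - y tb = ∫ t in (0:ℝ)..tb, Φ (tb, t) (deriv σ t - f (σ t)) := by
  intro tb htb
  have hFTC := sub_eq_integral_of_hasFDerivAt_graph htb.1
    (fun t _ => hσ.differentiable one_ne_zero t) (hFderiv tb htb) (hcont tb htb)
  rwa [hFid tb htb, hσ0, ← hy] at hFTC

/-- Error representation (first step in the proof of Theorem 2.6): if `F t ξ η` is the
general solution map of `ẏ = f(y)`, `Φ` the variational propagator, `σ` a `C¹` curve with
`σ(0) = y₀` and `y(t) = F t 0 y₀`, then
`σ(tb) - y(tb) = ∫_0^{tb} Φ(tb, t)(σ'(t) - f(σ(t))) dt` for every `tb ∈ [0, T]`. -/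
theorem error_representation
    {E : Type*} [NormedAddCommGroup E] [NormedSpace ℝ E] [CompleteSpace E]
    (f : E → E) (hf : Continuous f) (y₀ : E) (T : ℝ) (hT : 0 < T)
    (F : ℝ → ℝ → E → E) (Φ : ℝ × ℝ → E →L[ℝ] E) (hΦ : Continuous Φ)
    (σ : ℝ → E) (hσ : ContDiff ℝ 1 σ) (hσ0 : σ 0 = y₀)
    (y : ℝ → E) (hy : ∀ t, y t = F t 0 y₀)
    (hFid : ∀ tb ∈ Set.Icc (0:ℝ) T, ∀ η : E, F tb tb η = η)
    (hFderiv : ∀ tb ∈ Set.Icc (0:ℝ) T, ∀ t ∈ Set.Icc (0:ℝ) tb,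
      HasFDerivAt (fun p : ℝ × E => F tb p.1 p.2)
        ((Φ (tb, t)).comp (ContinuousLinearMap.snd ℝ ℝ E) -
          (ContinuousLinearMap.fst ℝ ℝ E).smulRight (Φ (tb, t) (f (σ t))))
        (t, σ t))
    (hcont : ∀ tb ∈ Set.Icc (0:ℝ) T,
      ContinuousOn (fun t : ℝ => Φ (tb, t) (deriv σ t - f (σ t))) (Set.Icc (0:ℝ) tb)) :
    ∀ tb ∈ Set.Icc (0:ℝ) T,
      σ tb - y tb = ∫ t in (0:ℝ)..tb, Φ (tb, t) (deriv σ t - f (σ t)) :=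
  error_representation_general f y₀ T F Φ σ hσ hσ0 y hy hFid hFderiv hcont
end

section
/- Let E be a real Banach space, f : E → E, y₀ ∈ E, h > 0, integers 1 ≤ s ≤ k, nodes c_1, …, c_k ∈ [0,1] and weights b_1, …, b_k ∈ ℝ. Define the Runge–Kutta coefficients a_{ij} = b_j Σ_{ℓ=0}^{s−1} (∫_0^{c_i} P_ℓ(x) dx) P_ℓ(c_j) for 1 ≤ i, j ≤ k. Then: (1) if Y_1, …, Y_k ∈ E satisfy the stage equations Y_i = y₀ + h Σ_{j=1}^k a_{ij} f(Y_j) for all i, then the vectors γ̂_ℓ := Σ_{j=1}^k b_j P_ℓ(c_j) f(Y_j) (ℓ = 0, …, s−1) satisfy both Y_i = y₀ + h Σ_{ℓ=0}^{s−1} (∫_0^{c_i} P_ℓ(x) dx) γ̂_ℓ for all i, and the discrete problem γ̂_ℓ = Σ_{j=1}^k b_j P_ℓ(c_j) f(y₀ + h Σ_{ℓ'=0}^{s−1} (∫_0^{c_j} P_{ℓ'}(x) dx) γ̂_{ℓ'}) for all ℓ; (2) conversely, if γ̂_0, …, γ̂_{s−1} ∈ E satisfy this discrete problem, then Y_i :=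 y₀ + h Σ_{ℓ=0}^{s−1} (∫_0^{c_i} P_ℓ(x) dx) γ̂_ℓ satisfy the stage equations. -/
/-
The Butcher matrix `a_{ij} = b_j Σ_{ℓ<s} (∫_0^{c_i} P_ℓ) P_ℓ(c_j)` has rank at most `s`, and
`Σ_j a_{ij} f(Y_j)` factors through the `s` vectors `γ̂_ℓ = Σ_j b_j P_ℓ(c_j) f(Y_j)`. Both directions
of the equivalence are this exchange of summations: the stage equations say that `Y_i` is
the reconstruction `y₀ + h Σ_ℓ (∫_0^{c_i} P_ℓ) γ̂_ℓ`, and substituting it back into the definition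
of `γ̂_ℓ` is the discrete problem.
-/

theorem Finset.sum_mul_sum_smul_comm {R M ι κ : Type*} [CommSemiring R] [AddCommMonoid M]
    [Module R M] (u : Finset ι) (t : Finset κ) (w : ι → R) (I : κ → R) (P : κ → ι → R)
    (g : ι → M) :
    ∑ j ∈ u, (w j * ∑ ℓ ∈ t, I ℓ * P ℓ j) • g j =
      ∑ ℓ ∈ t, I ℓ • ∑ j ∈ u, (w j * P ℓ j) • g j := by
  simp_rw [Finset.mul_sum, Finset.sum_smul, Finset.smul_sum, smul_smul]
  rw [Finset.sum_comm]
  simp only [mul_left_comm]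

theorem hbvm_stage_equations_equiv_discrete_problem_general
    {E : Type*} [NormedAddCommGroup E] [NormedSpace ℝ E]
    (f : E → E) (y₀ : E) (h : ℝ) (s k : ℕ)
    (c b : Fin k → ℝ)
    (a : Fin k → Fin k → ℝ)
    (ha : ∀ i j, a i j =
      b j * ∑ ℓ ∈ Finset.range s, (∫ x in (0:ℝ)..(c i), legendreP ℓ x) * legendreP ℓ (c j)) :
    (∀ Y : Fin k → E,
      (∀ i, Y i = y₀ + h • ∑ j, a i j • f (Y j)) →
      ((∀ i, Y i = y₀ + h • ∑ ℓ ∈ Finset.range s,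
          (∫ x in (0:ℝ)..(c i), legendreP ℓ x) • ∑ j, (b j * legendreP ℓ (c j)) • f (Y j)) ∧
       (∀ ℓ ∈ Finset.range s,
          (∑ j, (b j * legendreP ℓ (c j)) • f (Y j)) =
            ∑ j, (b j * legendreP ℓ (c j)) •
              f (y₀ + h • ∑ ℓ' ∈ Finset.range s,
                (∫ x in (0:ℝ)..(c j), legendreP ℓ' x) •
                  ∑ j', (b j' * legendreP ℓ' (c j')) • f (Y j'))))) ∧
    (∀ γ : ℕ → E,
      (∀ ℓ ∈ Finset.range s,
        γ ℓ = ∑ j, (b j * legendreP ℓ (c j)) •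
          f (y₀ + h • ∑ ℓ' ∈ Finset.range s,
            (∫ x in (0:ℝ)..(c j), legendreP ℓ' x) • γ ℓ')) →
      ∀ i, (y₀ + h • ∑ ℓ ∈ Finset.range s, (∫ x in (0:ℝ)..(c i), legendreP ℓ x) • γ ℓ) =
        y₀ + h • ∑ j, a i j •
          f (y₀ + h • ∑ ℓ' ∈ Finset.range s,
            (∫ x in (0:ℝ)..(c j), legendreP ℓ' x) • γ ℓ')) := by
  have factor : ∀ (g : Fin k → E) i, ∑ j, a i j • g j = ∑ ℓ ∈ Finset.range s,
      (∫ x in (0:ℝ)..(c i), legendreP ℓ x) • ∑ j, (b j * legendreP ℓ (c j)) • g j := by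
    intro g i
    simp only [ha]
    exact Finset.sum_mul_sum_smul_comm _ _ _ _ _ g
  refine ⟨fun Y hY => ?_, fun γ hγ i => ?_⟩
  · have reconstruction : ∀ i, Y i = y₀ + h • ∑ ℓ ∈ Finset.range s,
        (∫ x in (0:ℝ)..(c i), legendreP ℓ x) • ∑ j, (b j * legendreP ℓ (c j)) • f (Y j) :=
      fun i => by rw [hY i, factor]
    exact ⟨reconstruction, fun ℓ _ => by simp only [← reconstruction]⟩
  · rw [factor]
    congr 2
    exact Finset.sum_congr rfl fun ℓ hℓ => by rw [← hγ ℓ hℓ]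

/-- Equivalence between the `k`-stage Runge-Kutta formulation of the HBVM(k,s) method and
the reduced discrete problem of block dimension `s`: with
`a_{ij} = b_j Σ_{ℓ<s} (∫_0^{c_i} P_ℓ) P_ℓ(c_j)`,
(1) if the stages `Y_i` solve the stage equations, then the vectors
`γ̂_ℓ = Σ_j b_j P_ℓ(c_j) f(Y_j)` reconstruct the stages and solve the discrete problem;
(2) conversely, a solution `γ̂` of the discrete problem yields stages solving the stage
equations. -/
theorem hbvm_stage_equations_equiv_discrete_problem
    {E : Type*} [NormedAddCommGroup E] [NormedSpace ℝ E]
    (f : E → E) (y₀ : E) (h : ℝ) (hh : 0 < h) (s k : ℕ) (hs : 1 ≤ s) (hsk : s ≤ k)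
    (c b : Fin k → ℝ) (hc : ∀ i, c i ∈ Set.Icc (0:ℝ) 1)
    (a : Fin k → Fin k → ℝ)
    (ha : ∀ i j, a i j =
      b j * ∑ ℓ ∈ Finset.range s, (∫ x in (0:ℝ)..(c i), legendreP ℓ x) * legendreP ℓ (c j)) :
    (∀ Y : Fin k → E,
      (∀ i, Y i = y₀ + h • ∑ j, a i j • f (Y j)) →
      ((∀ i, Y i = y₀ + h • ∑ ℓ ∈ Finset.range s,
          (∫ x in (0:ℝ)..(c i), legendreP ℓ x) • ∑ j, (b j * legendreP ℓ (c j)) • f (Y j)) ∧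
       (∀ ℓ ∈ Finset.range s,
          (∑ j, (b j * legendreP ℓ (c j)) • f (Y j)) =
            ∑ j, (b j * legendreP ℓ (c j)) •
              f (y₀ + h • ∑ ℓ' ∈ Finset.range s,
                (∫ x in (0:ℝ)..(c j), legendreP ℓ' x) •
                  ∑ j', (b j' * legendreP ℓ' (c j')) • f (Y j'))))) ∧
    (∀ γ : ℕ → E,
      (∀ ℓ ∈ Finset.range s,
        γ ℓ = ∑ j, (b j * legendreP ℓ (c j)) •
          f (y₀ + h • ∑ ℓ' ∈ Finset.range s,
            (∫ x in (0:ℝ)..(c j), legendreP ℓ' x) • γ ℓ')) →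
      ∀ i, (y₀ + h • ∑ ℓ ∈ Finset.range s, (∫ x in (0:ℝ)..(c i), legendreP ℓ x) • γ ℓ) =
        y₀ + h • ∑ j, a i j •
          f (y₀ + h • ∑ ℓ' ∈ Finset.range s,
            (∫ x in (0:ℝ)..(c j), legendreP ℓ' x) • γ ℓ')) :=
  hbvm_stage_equations_equiv_discrete_problem_general f y₀ h s k c b a ha
end
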